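/- arXiv:2601.13477 — 6 statements merged into one kernel-verified Lean document; each statement's English description precedes it below -/
import Mathlib

section
/- For integers n ≥ 2, s ≥ 1, and 1 ≤ e < n-1, the ratio of sizes of symmetric limited-magnitude error balls satisfies |V(n,e+1,s)|/|V(n,e,s)| ≥ 2s(n-e)/(e+1), where |V(n,e,s)| = ∑_{i=0}^{e} C(n,i)(2s)^i. -/
/-- Size of the symmetric limited-magnitude error ball `V(n,e,s)`. -/
noncomputable def ballSize (n e s : ℕ) : ℝ :=
  ∑ i ∈ Finset.range (e + 1), (n.choose i : ℝ) * (2 * s) ^ i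

theorem stmt0 (n e s : ℕ) (hn : 2 ≤ n) (hs : 1 ≤ s) (he1 : 1 ≤ e) (he2 : e < n - 1) :
    ballSize n (e + 1) s / ballSize n e s ≥ 2 * s * ((n : ℝ) - e) / ((e : ℝ) + 1) := by
  have hen : e < n := lt_of_lt_of_le he2 (Nat.sub_le n 1)
  set x : ℝ := 2 * s with hx
  have hxpos : 0 < x := by
    have : (1:ℝ) ≤ s := by exact_mod_cast hs
    nlinarith
  set c : ℝ := x * ((n : ℝ) - e) / ((e : ℝ) + 1) with hc
  -- denominator positive
  have hD : 0 < ballSize n e s := by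
    unfold ballSize
    apply Finset.sum_pos
    · intro i hi
      have hie : i < e + 1 := Finset.mem_range.mp hi
      have hin : i ≤ n := by omega
      have : 0 < n.choose i := Nat.choose_pos hin
      positivity
    · exact ⟨0, Finset.mem_range.mpr (Nat.succ_pos e)⟩
  rw [ge_iff_le, le_div_iff₀ hD]
  -- key termwise inequality
  have hterm : ∀ i ∈ Finset.range (e + 1),
      c * ((n.choose i : ℝ) * x ^ i) ≤ (n.choose (i+1) : ℝ) * x ^ (i+1) := by
    intro i hi
    have hie : i ≤ e := Nat.lt_succ_iff.mp (Finset.mem_range.mp hi)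
    have hin : i < n := lt_of_le_of_lt hie hen
    have h1 : (n.choose (i+1) : ℝ) * ((i:ℝ)+1) = (n.choose i : ℝ) * ((n:ℝ) - i) := by
      have h := Nat.choose_succ_right_eq n i
      have := congrArg (Nat.cast : ℕ → ℝ) h
      push_cast [Nat.cast_sub hin.le] at this
      linarith [this]
    have hi1 : (0:ℝ) < (i:ℝ) + 1 := by positivity
    have he1' : (0:ℝ) < (e:ℝ) + 1 := by positivity
    have hine : (i:ℝ) ≤ (e:ℝ) := by exact_mod_cast hie
    have hne : (e:ℝ) < (n:ℝ) := by exact_mod_cast hen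
    have hratio : ((n:ℝ) - e) / ((e:ℝ) + 1) * (n.choose i : ℝ) ≤ (n.choose (i+1) : ℝ) := by
      rw [div_mul_eq_mul_div, div_le_iff₀ he1']
      have hchpos : (0:ℝ) ≤ (n.choose i : ℝ) := by positivity
      nlinarith [h1]
    have hxp : (0:ℝ) ≤ x ^ i := le_of_lt (pow_pos hxpos i)
    calc c * ((n.choose i : ℝ) * x ^ i)
        = (((n:ℝ) - e) / ((e:ℝ) + 1) * (n.choose i : ℝ)) * (x ^ i * x) := by
          rw [hc]; ring
      _ ≤ (n.choose (i+1) : ℝ) * (x ^ i * x) := by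
          apply mul_le_mul_of_nonneg_right hratio
          positivity
      _ = (n.choose (i+1) : ℝ) * x ^ (i+1) := by ring
  calc c * ballSize n e s
      = ∑ i ∈ Finset.range (e + 1), c * ((n.choose i : ℝ) * x ^ i) := by
        unfold ballSize; rw [Finset.mul_sum]
    _ ≤ ∑ i ∈ Finset.range (e + 1), (n.choose (i+1) : ℝ) * x ^ (i+1) :=
        Finset.sum_le_sum hterm
    _ ≤ (n.choose 0 : ℝ) * x ^ 0 +
        ∑ i ∈ Finset.range (e + 1), (n.choose (i+1) : ℝ) * x ^ (i+1) := by
        simp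
    _ = ballSize n (e + 1) s := by
        unfold ballSize
        rw [Finset.sum_range_succ' (fun i => (n.choose i : ℝ) * x ^ i) (e+1)]
        ring
end

section
/- Let s ≥ 1 and define, for x, y ∈ ℤ^n, d_s(x,y) = N_s(x,y) + 2·M_s(x,y) if max_i |x_i - y_i| ≤ 2s, and d_s(x,y) = 2n+1 otherwise, where N_s counts coordinates with 1 ≤ |x_i-y_i| ≤ s and M_s counts coordinates with s+1 ≤ |x_i-y_i| ≤ 2s. Then for every e ≤ n: a vector e ∈ ℤ^n can be written as e = e₁ - e₂ with e₁, e₂ ∈ V(n,e,s) if and only if d_s(e, 0) ≤ 2e. -/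
open scoped Classical

/-- Hamming weight of an integer vector. -/
def wt {n : ℕ} (v : Fin n → ℤ) : ℕ := (Finset.univ.filter (fun i => v i ≠ 0)).card

/-- The symmetric limited-magnitude error ball `V(n,e,s)`. -/
def Ball (n e s : ℕ) : Set (Fin n → ℤ) := {v | wt v ≤ e ∧ ∀ i, |v i| ≤ (s : ℤ)}

/-- The limited-magnitude distance `d_s`. -/
noncomputable def dS (s : ℕ) {n : ℕ} (x y : Fin n → ℤ) : ℕ :=
  if ∀ i, |x i - y i| ≤ 2 * (s : ℤ) then
    (Finset.univ.filter (fun i => 1 ≤ |x i - y i| ∧ |x i - y i| ≤ (s : ℤ))).card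
      + 2 * (Finset.univ.filter
          (fun i => (s : ℤ) + 1 ≤ |x i - y i| ∧ |x i - y i| ≤ 2 * (s : ℤ))).card
  else 2 * n + 1

theorem stmt2 (n s t : ℕ) (hs : 1 ≤ s) (ht : t ≤ n) (v : Fin n → ℤ) :
    (∃ e₁ e₂ : Fin n → ℤ, e₁ ∈ Ball n t s ∧ e₂ ∈ Ball n t s ∧ v = e₁ - e₂) ↔
      dS s v 0 ≤ 2 * t := by
  constructor
  · rintro ⟨e₁, e₂, ⟨h1w, h1b⟩, ⟨h2w, h2b⟩, rfl⟩
    have hall : ∀ i, |(e₁ - e₂) i - (0 : Fin n → ℤ) i| ≤ 2 * (s : ℤ) := by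
      intro i
      simp only [Pi.sub_apply, Pi.zero_apply, sub_zero]
      have h1 := h1b i; have h2 := h2b i
      have ha := abs_sub (e₁ i) (e₂ i)
      omega
    rw [dS, if_pos hall]
    set N := Finset.univ.filter
      (fun i => 1 ≤ |(e₁ - e₂) i - (0 : Fin n → ℤ) i| ∧
        |(e₁ - e₂) i - (0 : Fin n → ℤ) i| ≤ (s : ℤ)) with hN
    set M := Finset.univ.filter
      (fun i => (s : ℤ) + 1 ≤ |(e₁ - e₂) i - (0 : Fin n → ℤ) i| ∧
        |(e₁ - e₂) i - (0 : Fin n → ℤ) i| ≤ 2 * (s : ℤ)) with hM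
    set S₁ := Finset.univ.filter (fun i => e₁ i ≠ 0) with hS₁
    set S₂ := Finset.univ.filter (fun i => e₂ i ≠ 0) with hS₂
    have hdisj : Disjoint N M := by
      rw [Finset.disjoint_left]
      intro i hi hi'
      simp only [hN, hM, Finset.mem_filter, Finset.mem_univ, true_and] at hi hi'
      omega
    have hsub1 : N ∪ M ⊆ S₁ ∪ S₂ := by
      intro i hi
      simp only [hN, hM, Finset.mem_union, Finset.mem_filter, Finset.mem_univ, true_and,
        Pi.sub_apply, Pi.zero_apply, sub_zero] at hi
      simp only [hS₁, hS₂, Finset.mem_union, Finset.mem_filter, Finset.mem_univ, true_and]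
      have : e₁ i - e₂ i ≠ 0 := by
        intro hc
        rcases hi with ⟨h, _⟩ | ⟨h, _⟩ <;> rw [hc, abs_zero] at h <;> omega
      · by_contra hc
        push_neg at hc
        obtain ⟨hc1, hc2⟩ := hc
        exact this (by rw [hc1, hc2]; ring)
    have hsub2 : M ⊆ S₁ ∩ S₂ := by
      intro i hi
      simp only [hM, Finset.mem_filter, Finset.mem_univ, true_and,
        Pi.sub_apply, Pi.zero_apply, sub_zero] at hi
      simp only [Finset.mem_inter, hS₁, hS₂, Finset.mem_filter, Finset.mem_univ, true_and]
      have h1 := h1b i; have h2 := h2b i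
      constructor <;> intro hc <;> rw [hc] at hi <;>
        [ (have : |(0 : ℤ) - e₂ i| = |e₂ i| := by simp);
          (have : |e₁ i - 0| = |e₁ i| := by simp) ] <;> rw [this] at hi <;> omega
    have hcards := Finset.card_union_add_card_inter S₁ S₂
    have h1 : (N ∪ M).card ≤ (S₁ ∪ S₂).card := Finset.card_le_card hsub1
    have h2 : M.card ≤ (S₁ ∩ S₂).card := Finset.card_le_card hsub2
    have h3 : (N ∪ M).card = N.card + M.card := Finset.card_union_of_disjoint hdisj
    have hw1 : S₁.card ≤ t := h1w
    have hw2 : S₂.card ≤ t := h2w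
    omega
  · intro h
    by_cases hall : ∀ i, |v i - (0 : Fin n → ℤ) i| ≤ 2 * (s : ℤ)
    · rw [dS, if_pos hall] at h
      have hall' : ∀ i, |v i| ≤ 2 * (s : ℤ) := by
        intro i; have := hall i; simpa using this
      set A := Finset.univ.filter
        (fun i => 1 ≤ |v i - (0 : Fin n → ℤ) i| ∧ |v i - (0 : Fin n → ℤ) i| ≤ (s : ℤ)) with hA
      set C := Finset.univ.filter
        (fun i => (s : ℤ) + 1 ≤ |v i - (0 : Fin n → ℤ) i| ∧
          |v i - (0 : Fin n → ℤ) i| ≤ 2 * (s : ℤ)) with hC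
      have hMt : C.card ≤ t := by omega
      obtain ⟨B, hBsub, hBcard⟩ :=
        Finset.exists_subset_card_eq (s := A) (n := min A.card (t - C.card)) (min_le_left _ _)
      set e₁ : Fin n → ℤ := fun i =>
        if (s : ℤ) + 1 ≤ |v i| then (if 0 < v i then (s : ℤ) else -(s : ℤ))
        else (if i ∈ B then v i else 0) with he₁
      refine ⟨e₁, e₁ - v, ⟨?_, ?_⟩, ⟨?_, ?_⟩, by abel⟩
      · -- wt e₁ ≤ t
        have hsub : Finset.univ.filter (fun i => e₁ i ≠ 0) ⊆ C ∪ B := by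
          intro i hi
          simp only [Finset.mem_filter, Finset.mem_univ, true_and, he₁] at hi
          simp only [Finset.mem_union, hC, Finset.mem_filter, Finset.mem_univ, true_and,
            Pi.zero_apply, sub_zero]
          by_cases hb : (s : ℤ) + 1 ≤ |v i|
          · exact Or.inl ⟨hb, hall' i⟩
          · rw [if_neg hb] at hi
            by_cases hB : i ∈ B
            · exact Or.inr hB
            · rw [if_neg hB] at hi; exact absurd rfl hi
        calc (Finset.univ.filter (fun i => e₁ i ≠ 0)).card ≤ (C ∪ B).card :=
              Finset.card_le_card hsub
          _ ≤ C.card + B.card := Finset.card_union_le _ _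
          _ ≤ t := by omega
      · -- bound e₁
        intro i
        simp only [he₁]
        by_cases hb : (s : ℤ) + 1 ≤ |v i|
        · rw [if_pos hb]; split <;> simp
        · rw [if_neg hb]
          by_cases hB : i ∈ B
          · rw [if_pos hB]; omega
          · rw [if_neg hB]; simp
      · -- wt (e₁ - v) ≤ t
        have hsub : Finset.univ.filter (fun i => (e₁ - v) i ≠ 0) ⊆ C ∪ (A \ B) := by
          intro i hi
          simp only [Finset.mem_filter, Finset.mem_univ, true_and, Pi.sub_apply, he₁] at hi
          simp only [Finset.mem_union, Finset.mem_sdiff, hC, hA, Finset.mem_filter,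
            Finset.mem_univ, true_and, Pi.zero_apply, sub_zero]
          by_cases hb : (s : ℤ) + 1 ≤ |v i|
          · exact Or.inl ⟨hb, hall' i⟩
          · rw [if_neg hb] at hi
            by_cases hB : i ∈ B
            · rw [if_pos hB] at hi; simp at hi
            · rw [if_neg hB] at hi
              rw [zero_sub, neg_ne_zero] at hi
              refine Or.inr ⟨⟨?_, ?_⟩, hB⟩ <;>
                rcases abs_cases (v i) with ⟨h1, h2⟩ | ⟨h1, h2⟩ <;> omega
        have hcd : (A \ B).card = A.card - B.card := Finset.card_sdiff_of_subset hBsub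
        calc (Finset.univ.filter (fun i => (e₁ - v) i ≠ 0)).card ≤ (C ∪ (A \ B)).card :=
              Finset.card_le_card hsub
          _ ≤ C.card + (A \ B).card := Finset.card_union_le _ _
          _ ≤ t := by omega
      · -- bound e₁ - v
        intro i
        simp only [Pi.sub_apply, he₁]
        have hvi := hall' i
        by_cases hb : (s : ℤ) + 1 ≤ |v i|
        · rw [if_pos hb]
          rcases abs_cases (v i) with ⟨h1, h2⟩ | ⟨h1, h2⟩
          · have hpos : 0 < v i := by omega
            rw [if_pos hpos, abs_le]
            constructor <;> omega
          · have hneg : ¬ 0 < v i := by omega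
            rw [if_neg hneg, abs_le]
            constructor <;> omega
        · rw [if_neg hb]
          by_cases hB : i ∈ B
          · rw [if_pos hB]; simp
          · rw [if_neg hB]
            rw [zero_sub, abs_neg]; omega
    · rw [dS, if_neg hall] at h
      omega
end

section
/- Let C ⊆ ℤ^n be a code such that the translates c + V(n,e,s) (c ∈ C) are pairwise disjoint, where V(n,e,s) is the set of integer vectors of Hamming weight ≤ e with entries in [-s,s]. Then for every coordinate i ∈ [n] and every nonzero x ∈ [-s,s], there is at most one codeword c ∈ C ∩ V(n,e+1,s) with c_i = x. -/
open scoped Classical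

theorem stmt4 (n e s : ℕ) (C : Set (Fin n → ℤ))
    (hpack : ∀ x ∈ C, ∀ y ∈ C, x ≠ y →
        Disjoint ((x + ·) '' Ball n e s) ((y + ·) '' Ball n e s))
    (i : Fin n) (x : ℤ) (hx : x ≠ 0) (hxs : |x| ≤ (s : ℤ)) :
    ∀ c ∈ C ∩ Ball n (e + 1) s, ∀ c' ∈ C ∩ Ball n (e + 1) s,
      c i = x → c' i = x → c = c' := by
  rintro c ⟨hcC, hcwt, hcs⟩ c' ⟨hc'C, hc'wt, hc's⟩ hci hc'i
  by_contra hne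
  have hx0 : c i ≠ 0 := hci ▸ hx
  have hx0' : c' i ≠ 0 := hc'i ▸ hx
  classical
  set z : Fin n → ℤ := fun j =>
    if c j ≠ 0 ∧ c' j ≠ 0 ∧ j ≠ i then 0 else if c j ≠ 0 then c j else c' j with hzdef
  have hwt1 : wt (z - c) ≤ e := by
    have hsub : Finset.univ.filter (fun j => (z - c) j ≠ 0) ⊆
        (Finset.univ.filter (fun j => c' j ≠ 0)).erase i := by
      intro j hj
      simp only [Finset.mem_filter, Finset.mem_univ, true_and, Pi.sub_apply] at hj
      simp only [Finset.mem_erase, Finset.mem_filter, Finset.mem_univ, true_and]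
      by_cases h1 : c j ≠ 0 ∧ c' j ≠ 0 ∧ j ≠ i
      · exact ⟨h1.2.2, h1.2.1⟩
      · by_cases h2 : c j ≠ 0
        · exfalso; apply hj
          have h4 : ¬(c' j ≠ 0 ∧ j ≠ i) := fun h => h1 ⟨h2, h⟩
          simp [hzdef, h2, h4]
        · refine ⟨?_, ?_⟩
          · rintro rfl; exact h2 hx0
          · intro h3; apply hj; simp [hzdef, h1, h2, h3, not_not.mp h2]
    have hcard := Finset.card_le_card hsub
    have hi : i ∈ Finset.univ.filter (fun j => c' j ≠ 0) := by simp [hx0']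
    have herase := Finset.card_erase_of_mem hi
    unfold wt at hc'wt ⊢
    omega
  have hwt2 : wt (z - c') ≤ e := by
    have hsub : Finset.univ.filter (fun j => (z - c') j ≠ 0) ⊆
        (Finset.univ.filter (fun j => c j ≠ 0)).erase i := by
      intro j hj
      simp only [Finset.mem_filter, Finset.mem_univ, true_and, Pi.sub_apply] at hj
      simp only [Finset.mem_erase, Finset.mem_filter, Finset.mem_univ, true_and]
      by_cases h1 : c j ≠ 0 ∧ c' j ≠ 0 ∧ j ≠ i
      · exact ⟨h1.2.2, h1.1⟩
      · by_cases h2 : c j ≠ 0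
        · refine ⟨?_, h2⟩
          rintro rfl
          apply hj
          simp [hzdef, h1, h2, hci, hc'i]
        · exfalso; apply hj; simp [hzdef, not_not.mp h2]
    have hcard := Finset.card_le_card hsub
    have hi : i ∈ Finset.univ.filter (fun j => c j ≠ 0) := by simp [hx0]
    have herase := Finset.card_erase_of_mem hi
    unfold wt at hcwt ⊢
    omega
  have hb1 : ∀ j, |(z - c) j| ≤ (s : ℤ) := by
    intro j
    by_cases h1 : c j ≠ 0 ∧ c' j ≠ 0 ∧ j ≠ i
    · simp only [Pi.sub_apply, hzdef, if_pos h1, zero_sub, abs_neg]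
      exact hcs j
    · by_cases h2 : c j ≠ 0
      · have h4 : ¬(c' j ≠ 0 ∧ j ≠ i) := fun h => h1 ⟨h2, h⟩
        simp [hzdef, h2, h4]
      · simp only [Pi.sub_apply, hzdef, if_neg h1, if_neg h2, not_not.mp h2, sub_zero]
        exact hc's j
  have hb2 : ∀ j, |(z - c') j| ≤ (s : ℤ) := by
    intro j
    by_cases h1 : c j ≠ 0 ∧ c' j ≠ 0 ∧ j ≠ i
    · simp only [Pi.sub_apply, hzdef, if_pos h1, zero_sub, abs_neg]
      exact hc's j
    · by_cases h2 : c j ≠ 0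
      · simp only [Pi.sub_apply, hzdef, if_neg h1, if_pos h2]
        by_cases h3 : j = i
        · subst h3; simp [hci, hc'i]
        · have : c' j = 0 := by
            by_contra h4
            exact h1 ⟨h2, h4, h3⟩
          simp only [this, sub_zero]
          exact hcs j
      · simp only [Pi.sub_apply, hzdef, if_neg h1, if_neg h2, not_not.mp h2, if_pos]
        simpa using hc's j
  have hmem1 : z ∈ (c + ·) '' Ball n e s := by
    exact ⟨z - c, ⟨hwt1, hb1⟩, by simp⟩
  have hmem2 : z ∈ (c' + ·) '' Ball n e s := by
    exact ⟨z - c', ⟨hwt2, hb2⟩, by simp⟩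
  exact Set.disjoint_left.mp (hpack c hcC c' hc'C hne) hmem1 hmem2
end

section
/- Let n ≥ 1, e ≥ 1, s ≥ 1, K ≥ 2 be integers, and suppose K points of ℤ^n all lie in V(n,e+1,s), each has at most e+1 nonzero coordinates so that the total number of nonzero entries over all K points is at most K(e+1), and for each coordinate i and each nonzero value x ∈ [−s,s], at most one of the K points has i-th coordinate equal to x. If additionally the pairwise d_s-distance between the points is at least 2e+1, then (((e+1)²/n) − 2)·K ≤ 2e. -/
open scoped Classical

/-- per-coordinate contribution to `dS`. -/
def gg (s : ℕ) (d : ℤ) : ℕ :=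
  if 1 ≤ |d| ∧ |d| ≤ (s : ℤ) then 1
  else if (s : ℤ) + 1 ≤ |d| ∧ |d| ≤ 2 * s then 2 else 0

lemma dS_eq_sum {n s : ℕ} (x y : Fin n → ℤ) (hx : ∀ i, |x i| ≤ (s : ℤ))
    (hy : ∀ i, |y i| ≤ (s : ℤ)) : dS s x y = ∑ i, gg s (x i - y i) := by
  have hw : ∀ i, |x i - y i| ≤ 2 * (s : ℤ) := by
    intro i
    have h1 := abs_le.mp (hx i)
    have h2 := abs_le.mp (hy i)
    rw [abs_le]; constructor <;> linarith [h1.1, h1.2, h2.1, h2.2]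
  rw [dS, if_pos hw, Finset.card_filter, Finset.card_filter, Finset.mul_sum,
    ← Finset.sum_add_distrib]
  refine Finset.sum_congr rfl fun i _ => ?_
  have hsi : (0 : ℤ) ≤ s := by positivity
  have habs : (0 : ℤ) ≤ |x i - y i| := abs_nonneg _
  unfold gg
  split_ifs <;> omega

lemma dS_le_two_n {n s : ℕ} (x y : Fin n → ℤ) (hx : ∀ i, |x i| ≤ (s : ℤ))
    (hy : ∀ i, |y i| ≤ (s : ℤ)) : dS s x y ≤ 2 * n := by
  rw [dS_eq_sum x y hx hy]
  calc ∑ i, gg s (x i - y i) ≤ ∑ _i : Fin n, 2 := by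
        refine Finset.sum_le_sum fun i _ => ?_
        unfold gg; split_ifs <;> omega
    _ = 2 * n := by simp [mul_comm]

set_option maxHeartbeats 2000000 in
theorem stmt9 (n e s K : ℕ) (hn : 1 ≤ n) (he : 1 ≤ e) (hs : 1 ≤ s) (hK : 2 ≤ K)
    (c : Fin K → (Fin n → ℤ))
    (hball : ∀ j, c j ∈ Ball n (e + 1) s)
    (htot : ∑ j, wt (c j) ≤ K * (e + 1))
    (huniq : ∀ (i : Fin n) (x : ℤ), x ≠ 0 → |x| ≤ (s : ℤ) →
        ∀ j j', c j i = x → c j' i = x → j = j')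
    (hdist : ∀ j j', j ≠ j' → 2 * e + 1 ≤ dS s (c j) (c j')) :
    (((e : ℝ) + 1) ^ 2 / n - 2) * K ≤ 2 * e := by
  classical
  have habs : ∀ j i, |c j i| ≤ (s : ℤ) := fun j i => (hball j).2 i
  -- e + 1 ≤ n
  have hen : e + 1 ≤ n := by
    have hne : (⟨0, by omega⟩ : Fin K) ≠ ⟨1, by omega⟩ := by
      intro h; simpa using congrArg Fin.val h
    have h1 := hdist _ _ hne
    have h2 := dS_le_two_n (c ⟨0, by omega⟩) (c ⟨1, by omega⟩) (habs _) (habs _)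
    omega
  -- indicators
  set pp : Fin n → Fin K → ℤ := fun i j => if 0 < c j i then 1 else 0 with hpp
  set nn : Fin n → Fin K → ℤ := fun i j => if c j i < 0 then 1 else 0 with hnn
  set P : Fin n → ℤ := fun i => ∑ j, pp i j with hP
  set N : Fin n → ℤ := fun i => ∑ j, nn i j with hN
  -- pointwise bound for pairs
  have claimA : ∀ (i : Fin n) (j j' : Fin K),
      (gg s (c j i - c j' i) : ℤ) ≤
        1 - (1 - pp i j - nn i j) * (1 - pp i j' - nn i j')
          + pp i j * nn i j' + nn i j * pp i j' := by
    intro i j j'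
    have hsi : (1 : ℤ) ≤ s := by exact_mod_cast hs
    have hj := abs_le.mp (habs j i)
    have hj' := abs_le.mp (habs j' i)
    simp only [hpp, hnn]
    unfold gg
    rcases abs_choice (c j i - c j' i) with hc | hc <;>
      split_ifs <;> omega
  -- per-coordinate sum over ordered pairs
  have key : ∀ i : Fin n,
      (∑ p ∈ (Finset.univ : Finset (Fin K)).offDiag, (gg s (c p.1 i - c p.2 i) : ℤ)) ≤
        (K : ℤ) ^ 2 - K - ((K : ℤ) - P i - N i) ^ 2 + ((K : ℤ) - P i - N i)
          + 2 * (P i * N i) := by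
    intro i
    have hb : (∑ p ∈ (Finset.univ : Finset (Fin K)).offDiag, (gg s (c p.1 i - c p.2 i) : ℤ)) ≤
        ∑ p ∈ (Finset.univ : Finset (Fin K)).offDiag,
          (1 - (1 - pp i p.1 - nn i p.1) * (1 - pp i p.2 - nn i p.2)
            + pp i p.1 * nn i p.2 + nn i p.1 * pp i p.2) := by
      refine Finset.sum_le_sum fun p _ => claimA i p.1 p.2
    refine hb.trans (le_of_eq ?_)
    have hsplit : ∀ F : Fin K × Fin K → ℤ,
        ∑ p ∈ (Finset.univ : Finset (Fin K)).offDiag, F p =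
          (∑ j, ∑ j', F (j, j')) - ∑ j, F (j, j) := by
      intro F
      have := Finset.sum_union (f := F)
        (Finset.disjoint_diag_offDiag (Finset.univ : Finset (Fin K)))
      rw [Finset.diag_union_offDiag] at this
      rw [eq_sub_iff_add_eq, ← Finset.sum_diag (Finset.univ : Finset (Fin K)) F,
        add_comm, ← this, ← Finset.sum_product', Finset.univ_product_univ]
    rw [hsplit]
    have hsq : ∀ j, pp i j * pp i j = pp i j := by
      intro j; simp only [hpp]; split_ifs <;> ring
    have hsqn : ∀ j, nn i j * nn i j = nn i j := by
      intro j; simp only [hnn]; split_ifs <;> ring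
    have hpn : ∀ j, pp i j * nn i j = 0 := by
      intro j; simp only [hpp, hnn]; split_ifs <;> omega
    have houter : (∑ j : Fin K, ∑ j' : Fin K,
        (1 - (1 - pp i j - nn i j) * (1 - pp i j' - nn i j')
          + pp i j * nn i j' + nn i j * pp i j')) =
        (K : ℤ) * K - ((K : ℤ) - P i - N i) * ((K : ℤ) - P i - N i)
          + P i * N i + N i * P i := by
      have hcard : ((Finset.univ : Finset (Fin K)).card : ℤ) = K := by simp
      have inner : ∀ j : Fin K, (∑ j' : Fin K,
          (1 - (1 - pp i j - nn i j) * (1 - pp i j' - nn i j')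
            + pp i j * nn i j' + nn i j * pp i j')) =
          (K : ℤ) - (1 - pp i j - nn i j) * ((K : ℤ) - P i - N i)
            + pp i j * N i + nn i j * P i := by
        intro j
        simp only [Finset.sum_add_distrib, Finset.sum_sub_distrib, ← Finset.mul_sum,
          Finset.sum_const, Finset.card_univ, Fintype.card_fin, nsmul_eq_mul, mul_one, hP, hN]
        all_goals (push_cast; ring)
      rw [Finset.sum_congr rfl fun j _ => inner j]
      simp only [Finset.sum_add_distrib, Finset.sum_sub_distrib, ← Finset.sum_mul,
        Finset.sum_const, Finset.card_univ, Fintype.card_fin, nsmul_eq_mul, mul_one, hP, hN]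
      all_goals (push_cast; ring)
    have hdiagsum : (∑ j : Fin K,
        (1 - (1 - pp i j - nn i j) * (1 - pp i j - nn i j)
          + pp i j * nn i j + nn i j * pp i j)) = (K : ℤ) - ((K : ℤ) - P i - N i) := by
      have : ∀ j : Fin K, (1 - (1 - pp i j - nn i j) * (1 - pp i j - nn i j)
          + pp i j * nn i j + nn i j * pp i j) = pp i j + nn i j := by
        intro j
        have := hsq j; have := hsqn j; have := hpn j
        nlinarith [hsq j, hsqn j, hpn j]
      rw [Finset.sum_congr rfl fun j _ => this j, Finset.sum_add_distrib]
      simp only [hP, hN]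
      ring
    rw [houter, hdiagsum]
    ring
  -- lower bound on sum over pairs
  have hlow : ((K : ℤ) * (K - 1) * (2 * e + 1)) ≤
      ∑ i, ∑ p ∈ (Finset.univ : Finset (Fin K)).offDiag, (gg s (c p.1 i - c p.2 i) : ℤ) := by
    rw [Finset.sum_comm]
    have hcard : (Finset.univ : Finset (Fin K)).offDiag.card = K * K - K := by
      simp [Finset.offDiag_card]
    have hstep : ∀ p ∈ (Finset.univ : Finset (Fin K)).offDiag,
        ((2 * e + 1 : ℕ) : ℤ) ≤ ∑ i, (gg s (c p.1 i - c p.2 i) : ℤ) := by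
      intro p hp
      rw [Finset.mem_offDiag] at hp
      have hd := hdist p.1 p.2 hp.2.2
      rw [dS_eq_sum _ _ (habs _) (habs _)] at hd
      have : ((2 * e + 1 : ℕ) : ℤ) ≤ ((∑ i, gg s (c p.1 i - c p.2 i) : ℕ) : ℤ) := by
        exact_mod_cast hd
      simpa [Nat.cast_sum] using this
    calc (K : ℤ) * (K - 1) * (2 * e + 1)
        = ((Finset.univ : Finset (Fin K)).offDiag.card : ℤ) * ((2 * e + 1 : ℕ) : ℤ) := by
          rw [hcard]
          have : ((K * K - K : ℕ) : ℤ) = (K : ℤ) * K - K := by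
            have : K ≤ K * K := Nat.le_mul_of_pos_left K (by omega)
            omega
          rw [this]; push_cast; ring
      _ ≤ ∑ p ∈ (Finset.univ : Finset (Fin K)).offDiag,
            ∑ i, (gg s (c p.1 i - c p.2 i) : ℤ) := by
          rw [← nsmul_eq_mul]
          exact Finset.card_nsmul_le_sum _ _ _ hstep
  -- total weight
  set S : ℤ := ∑ i, (P i + N i) with hSdef
  have hSwt : S = ∑ j, (wt (c j) : ℤ) := by
    have hper : ∀ i, P i + N i = ∑ j, (if c j i ≠ 0 then (1 : ℤ) else 0) := by
      intro i
      simp only [hP, hN, ← Finset.sum_add_distrib]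
      refine Finset.sum_congr rfl fun j _ => ?_
      simp only [hpp, hnn]
      rcases lt_trichotomy (c j i) 0 with h | h | h <;> simp [h] <;> omega
    rw [hSdef, Finset.sum_congr rfl fun i _ => hper i, Finset.sum_comm]
    refine Finset.sum_congr rfl fun j _ => ?_
    rw [wt, Finset.card_filter]
    push_cast
    rfl
  have hStot : S ≤ (K : ℤ) * (e + 1) := by
    rw [hSwt]
    calc (∑ j, (wt (c j) : ℤ)) = ((∑ j, wt (c j) : ℕ) : ℤ) := by push_cast; rfl
      _ ≤ ((K * (e + 1) : ℕ) : ℤ) := by exact_mod_cast htot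
      _ = (K : ℤ) * (e + 1) := by push_cast; ring
  -- Cauchy-Schwarz
  have hCS : S ^ 2 ≤ (n : ℤ) * ∑ i, (P i + N i) ^ 2 := by
    have := sq_sum_le_card_mul_sum_sq (s := (Finset.univ : Finset (Fin n)))
      (f := fun i => P i + N i)
    simpa [hSdef] using this
  -- combine per-coordinate
  have hQ : 2 * ((K : ℤ) * (K - 1) * (2 * e + 1)) ≤
      4 * K * S - 2 * S - ∑ i, (P i + N i) ^ 2 := by
    have hper : ∀ i : Fin n,
        2 * ((K : ℤ) ^ 2 - K - ((K : ℤ) - P i - N i) ^ 2 + ((K : ℤ) - P i - N i)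
          + 2 * (P i * N i)) ≤
        4 * (K : ℤ) * (P i + N i) - 2 * (P i + N i) - (P i + N i) ^ 2 := by
      intro i
      nlinarith [sq_nonneg (P i - N i)]
    have hsum : ∑ i, (2 * ((K : ℤ) ^ 2 - K - ((K : ℤ) - P i - N i) ^ 2
        + ((K : ℤ) - P i - N i) + 2 * (P i * N i))) ≤
        ∑ i, (4 * (K : ℤ) * (P i + N i) - 2 * (P i + N i) - (P i + N i) ^ 2) :=
      Finset.sum_le_sum fun i _ => hper i
    have hrhs : ∑ i, (4 * (K : ℤ) * (P i + N i) - 2 * (P i + N i) - (P i + N i) ^ 2) =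
        4 * K * S - 2 * S - ∑ i, (P i + N i) ^ 2 := by
      rw [hSdef]
      simp only [Finset.sum_sub_distrib, Finset.mul_sum]
    have hlhs : 2 * ((K : ℤ) * (K - 1) * (2 * e + 1)) ≤
        ∑ i, (2 * ((K : ℤ) ^ 2 - K - ((K : ℤ) - P i - N i) ^ 2
          + ((K : ℤ) - P i - N i) + 2 * (P i * N i))) := by
      have h2 : ∑ i, ∑ p ∈ (Finset.univ : Finset (Fin K)).offDiag, (gg s (c p.1 i - c p.2 i) : ℤ) ≤
          ∑ i, ((K : ℤ) ^ 2 - K - ((K : ℤ) - P i - N i) ^ 2 + ((K : ℤ) - P i - N i)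
            + 2 * (P i * N i)) := Finset.sum_le_sum fun i _ => key i
      have := hlow.trans h2
      rw [← Finset.mul_sum]
      linarith
    linarith [hlhs.trans hsum]
  -- final integer inequality
  have hKZ : (2 : ℤ) ≤ K := by exact_mod_cast hK
  have hnZ : (1 : ℤ) ≤ n := by exact_mod_cast hn
  have heZ : (1 : ℤ) ≤ e := by exact_mod_cast he
  have hAn : (e : ℤ) + 1 ≤ n := by exact_mod_cast hen
  have hSnn : (0 : ℤ) ≤ S := by
    rw [hSwt]; exact Finset.sum_nonneg fun j _ => by positivity
  have hKAn : (K : ℤ) * ((e : ℤ) + 1) ≤ (K : ℤ) * n :=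
    mul_le_mul_of_nonneg_left hAn (by linarith)
  have hfinal : (K : ℤ) * ((e : ℤ) + 1) ^ 2 ≤ (2 * e + 2 * K) * n := by
    have h1 : (0 : ℤ) ≤ (K * ((e : ℤ) + 1) - S) := by linarith [hStot]
    have h2 : (0 : ℤ) ≤ (4 * K - 2) * (n : ℤ) - (K * ((e : ℤ) + 1) + S) := by
      have hnn2 : (0 : ℤ) ≤ (2 * K - 2) * n := mul_nonneg (by linarith) (by linarith)
      linarith [hStot, hKAn]
    have hmono : (4 * K - 2) * (n : ℤ) * S - S ^ 2 ≤
        (4 * K - 2) * n * ((K : ℤ) * ((e : ℤ) + 1)) - ((K : ℤ) * ((e : ℤ) + 1)) ^ 2 := by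
      linarith [mul_nonneg h1 h2]
    have h3 := mul_le_mul_of_nonneg_left hQ (show (0 : ℤ) ≤ n by linarith)
    have hmul : (n : ℤ) * (2 * ((K : ℤ) * (K - 1) * (2 * e + 1))) ≤
        (4 * K - 2) * (n : ℤ) * S - S ^ 2 := by linarith [h3, hCS]
    have hchain := hmul.trans hmono
    have hKmul : (K : ℤ) * ((K : ℤ) * ((e : ℤ) + 1) ^ 2) ≤
        (K : ℤ) * ((2 * e + 2 * K) * n) := by linarith [hchain]
    exact le_of_mul_le_mul_left hKmul (by linarith)
  -- convert to reals
  have hnR : (0 : ℝ) < n := by exact_mod_cast hn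
  have hfinalR : (K : ℝ) * ((e : ℝ) + 1) ^ 2 ≤ (2 * e + 2 * K) * n := by
    exact_mod_cast hfinal
  rw [sub_mul, div_mul_eq_mul_div, sub_le_iff_le_add, div_le_iff₀ hnR]
  linarith [hfinalR]
end

section
/- Let n ≥ 3, e, r ≥ 1 be integers with e + r < n − 1 and e < n/2 − r, and set K = ⌈2^r (n−e−r+1)^r / (e+r)^r⌉ viewed as a real number K ≥ 2^r. If additionally 2^r ≥ n and 2e + 1 ≤ (2e + 2r − (e+r)²/n)·K/(K−1), then (e+r)² < 2rn. -/
theorem stmt14 (n e r : ℕ) (hn : 3 ≤ n) (he : 1 ≤ e) (hr : 1 ≤ r)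
    (h1 : e + r < n - 1) (h2 : (e : ℝ) < (n : ℝ) / 2 - r)
    (K : ℝ)
    (hKdef : K = ((⌈(2 : ℝ) ^ r * ((n : ℝ) - e - r + 1) ^ r / ((e : ℝ) + r) ^ r⌉ : ℤ) : ℝ))
    (hK2 : (2 : ℝ) ^ r ≤ K)
    (h3 : (n : ℝ) ≤ (2 : ℝ) ^ r)
    (h4 : 2 * (e : ℝ) + 1 ≤ (2 * e + 2 * r - ((e : ℝ) + r) ^ 2 / n) * K / (K - 1)) :
    ((e : ℝ) + r) ^ 2 < 2 * r * n := by
  have hn3 : (3 : ℝ) ≤ (n : ℝ) := by exact_mod_cast hn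
  have hr1 : (1:ℝ) ≤ (r:ℝ) := by exact_mod_cast hr
  have hKn : (n : ℝ) ≤ K := le_trans h3 hK2
  have hK1 : (1 : ℝ) < K := by linarith
  have hKpos : (0 : ℝ) < K - 1 := by linarith
  have hnpos : (0 : ℝ) < (n : ℝ) := by linarith
  -- 2e + 2r < n
  have h2' : 2 * (e : ℝ) + 2 * r < n := by linarith
  -- from h4: (2e+1)(K-1) ≤ (2e+2r - (e+r)²/n) K
  have h5 : (2 * (e : ℝ) + 1) * (K - 1) ≤ (2 * e + 2 * r - ((e : ℝ) + r) ^ 2 / n) * K := by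
    rw [le_div_iff₀ hKpos] at h4
    linarith
  have hdiv : ((e : ℝ) + r) ^ 2 / n * n = ((e : ℝ) + r) ^ 2 := div_mul_cancel₀ _ hnpos.ne'
  -- deduce (e+r)²/n < 2r
  have h6 : ((e : ℝ) + r) ^ 2 / n < 2 * r := by
    by_contra h
    push_neg at h
    nlinarith [h5, mul_le_mul_of_nonneg_right h (by linarith : (0:ℝ) ≤ K)]
  calc ((e : ℝ) + r) ^ 2 = ((e : ℝ) + r) ^ 2 / n * n := hdiv.symm
    _ < 2 * r * n := by exact mul_lt_mul_of_pos_right h6 hnpos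
end

section
/- For n ≥ 1348 and real r = ⌈log_{6/5}(5n/3)⌉, the inequalities (4n−2)/5 < (5/6)n − r − 1 and √((8/3)·n·r) < (2/3)(n−1) both hold. -/
theorem stmt18 (n : ℕ) (hn : 1348 ≤ n) :
    (4 * (n : ℝ) - 2) / 5 <
        (5 / 6) * (n : ℝ) - ((⌈Real.logb (6 / 5) (5 * (n : ℝ) / 3)⌉ : ℤ) : ℝ) - 1 ∧
    Real.sqrt ((8 / 3) * (n : ℝ) * ((⌈Real.logb (6 / 5) (5 * (n : ℝ) / 3)⌉ : ℤ) : ℝ)) <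
        (2 / 3) * ((n : ℝ) - 1) := by
  have hn' : (1348:ℝ) ≤ (n:ℝ) := by exact_mod_cast hn
  set x : ℝ := 5 * (n:ℝ) / 3 with hxdef
  have hx1 : (2246:ℝ) ≤ x := by rw [hxdef]; linarith
  have hx0 : 0 < x := by linarith
  -- lower bound on log (6/5)
  have hL : (91/500 : ℝ) ≤ Real.log (6/5) := by
    have h : Real.exp (91/500) ≤ 6/5 := by
      have h1 : Real.exp (91/500) ^ 500 = Real.exp 1 ^ 91 := by
        rw [← Real.exp_nat_mul, ← Real.exp_nat_mul]; norm_num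
      have h2 : Real.exp 1 ^ 91 < ((6:ℝ)/5) ^ 500 := by
        calc Real.exp 1 ^ 91 < (2.7182818286:ℝ) ^ 91 :=
              pow_lt_pow_left₀ Real.exp_one_lt_d9 (Real.exp_pos 1).le (by norm_num)
          _ < ((6:ℝ)/5) ^ 500 := by rw [show (500:ℕ) = 100 * 5 from rfl, pow_mul]; norm_num
      have h3 : Real.exp (91/500) ^ 500 < ((6:ℝ)/5) ^ 500 := by rw [h1]; exact h2
      exact (lt_of_pow_lt_pow_left₀ 500 (by norm_num) h3).le
    exact (Real.le_log_iff_exp_le (by norm_num)).2 h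
  -- upper bound on log (6/5)
  have hU : Real.log (6/5) ≤ 183/1000 := by
    have h : (6/5:ℝ) ≤ Real.exp (183/1000) := by
      have h1 : Real.exp (183/1000) ^ 1000 = Real.exp 1 ^ 183 := by
        rw [← Real.exp_nat_mul, ← Real.exp_nat_mul]; norm_num
      have h2 : ((6:ℝ)/5) ^ 1000 < Real.exp 1 ^ 183 := by
        calc ((6:ℝ)/5) ^ 1000 < (2.7182818283:ℝ) ^ 183 := by rw [show (1000:ℕ) = 100 * 10 from rfl, pow_mul]; norm_num
          _ < Real.exp 1 ^ 183 :=
              pow_lt_pow_left₀ Real.exp_one_gt_d9 (by norm_num) (by norm_num)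
      have h3 : ((6:ℝ)/5) ^ 1000 < Real.exp (183/1000) ^ 1000 := by rw [h1]; exact h2
      exact (lt_of_pow_lt_pow_left₀ 1000 (Real.exp_pos _).le h3).le
    exact (Real.log_le_iff_le_exp (by norm_num)).2 h
  have hLpos : (0:ℝ) < Real.log (6/5) := lt_of_lt_of_le (by norm_num) hL
  -- upper bound on log 2500
  have h2500 : Real.log 2500 ≤ 43 * Real.log (6/5) := by
    have hpow : (2500:ℝ) ≤ (6/5) ^ 43 := by norm_num
    calc Real.log 2500 ≤ Real.log ((6/5) ^ 43) :=
          Real.log_le_log (by norm_num) hpow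
      _ = 43 * Real.log (6/5) := by rw [Real.log_pow]; norm_num
  -- tangent line bound on log x
  have htan : Real.log x ≤ Real.log 2500 + x/2500 - 1 := by
    have h1 : Real.log (x/2500) ≤ x/2500 - 1 :=
      Real.log_le_sub_one_of_pos (by positivity)
    have h2 : Real.log (x/2500) = Real.log x - Real.log 2500 :=
      Real.log_div (ne_of_gt hx0) (by norm_num)
    linarith
  have hA : Real.log x ≤ 43 * (183/1000) + x/2500 - 1 := by nlinarith
  have hxlog0 : 0 ≤ Real.log x := Real.log_nonneg (by linarith)
  have hAnn : (0:ℝ) ≤ 43 * (183/1000) + x/2500 - 1 := by nlinarith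
  have hlogb : Real.logb (6/5) x ≤ (43 * (183/1000) + x/2500 - 1) / (91/500) := by
    rw [Real.logb]
    exact div_le_div₀ hAnn hA (by norm_num) hL
  have hceil : ((⌈Real.logb (6/5) x⌉ : ℤ) : ℝ) < Real.logb (6/5) x + 1 :=
    Int.ceil_lt_add_one _
  have key : ((⌈Real.logb (6/5) x⌉ : ℤ) : ℝ) < ((n:ℝ) - 18) / 30 := by
    have : (43 * (183/1000) + x/2500 - 1) / (91/500) ≤ ((n:ℝ) - 48) / 30 := by
      rw [div_le_div_iff₀ (by norm_num) (by norm_num)]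
      rw [hxdef]; linarith
    linarith
  constructor
  · linarith
  · rw [Real.sqrt_lt' (by linarith)]
    nlinarith [mul_lt_mul_of_pos_left key (show (0:ℝ) < (8/3) * (n:ℝ) by linarith),
      sq_nonneg ((n:ℝ) - 1)]
end
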